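/- For all integers k ≥ 1 and n ≥ 1, the number of partial rectangles (π, τ) on an n-element set such that π has exactly k blocks, viewed as a real number, equals (n! / (k! · e)) · Σ_{l=0}^{∞} (1/l!) · Σ_{j=0}^{k} (−1)^{k−j} · C(k, j) · C(l·j, n), where C(a, b) denotes the binomial coefficient, e is Euler's number, and the outer series converges. -/

import Mathlib

/-- A partial rectangle on the finite set `Fin n`: a pair of set partitions such that
every block of the first meets every block of the second in at most one element. -/
def IsPartialRectangle {n : ℕ} (π τ : Finpartition (Finset.univ : Finset (Fin n))) : Prop :=
  ∀ B ∈ π.parts, ∀ C ∈ τ.parts, (B ∩ C).card ≤ 1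

open Finset Function

namespace PittelAux

lemma nat_card_sigma {ι : Type*} [Fintype ι] (f : ι → Type*) [∀ i, Finite (f i)] :
    Nat.card (Σ i, f i) = ∑ i, Nat.card (f i) := by
  have : ∀ i, Fintype (f i) := fun i => Fintype.ofFinite _
  simp [Nat.card_eq_fintype_card, Fintype.card_sigma]

/-- Restricting the second coordinate to its image (relabeled as `Fin J.card`). -/
noncomputable def restrictEquiv {n : ℕ} {α : Type*} (Q : (Fin n → α) → Prop)
    {B : Type*} [Fintype B] [DecidableEq B] (J : Finset B) :
    {φ : Fin n → α × B // (Injective φ ∧ Q (fun x => (φ x).1)) ∧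
        image (fun x => (φ x).2) univ = J} ≃
    {ψ : Fin n → α × Fin J.card // Injective ψ ∧ Q (fun x => (ψ x).1) ∧
        Surjective (fun x => (ψ x).2)} where
  toFun φ := by
    refine ⟨fun x => ((φ.1 x).1, J.equivFin ⟨(φ.1 x).2, ?_⟩), ?_, ?_, ?_⟩
    · have : (φ.1 x).2 ∈ image (fun x => (φ.1 x).2) univ := mem_image_of_mem _ (mem_univ x)
      rwa [φ.2.2] at this
    · intro x y hxy
      simp only [Prod.mk.injEq] at hxy
      exact φ.2.1.1 (Prod.ext hxy.1 (congrArg Subtype.val (J.equivFin.injective hxy.2)))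
    · exact φ.2.1.2
    · intro j
      obtain ⟨b, hb⟩ := J.equivFin.surjective j
      have hbJ : (b : B) ∈ image (fun x => (φ.1 x).2) univ := by rw [φ.2.2]; exact b.2
      obtain ⟨x, -, hx⟩ := mem_image.1 hbJ
      exact ⟨x, (congrArg J.equivFin (Subtype.ext hx)).trans hb⟩
  invFun ψ := by
    refine ⟨fun x => ((ψ.1 x).1, (J.equivFin.symm (ψ.1 x).2 : B)), ⟨?_, ?_⟩, ?_⟩
    · intro x y hxy
      simp only [Prod.mk.injEq] at hxy
      exact ψ.2.1 (Prod.ext hxy.1 (J.equivFin.symm.injective (Subtype.ext hxy.2)))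
    · exact ψ.2.2.1
    · apply Finset.Subset.antisymm
      · intro b hb
        rw [mem_image] at hb
        obtain ⟨x, -, hx⟩ := hb
        rw [← hx]
        exact (J.equivFin.symm (ψ.1 x).2).2
      · intro b hb
        obtain ⟨x, hx⟩ := ψ.2.2.2 (J.equivFin ⟨b, hb⟩)
        rw [mem_image]
        refine ⟨x, mem_univ x, ?_⟩
        simp only at hx ⊢
        rw [hx, Equiv.symm_apply_apply]
  left_inv φ := by
    apply Subtype.ext
    funext x
    exact Prod.ext rfl (by simp)
  right_inv ψ := by
    apply Subtype.ext
    funext x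
    exact Prod.ext rfl (by simp)

lemma card_classify {n : ℕ} (α : Type*) [Fintype α] (Q : (Fin n → α) → Prop)
    (B : Type*) [Fintype B] [DecidableEq B] :
    Nat.card {φ : Fin n → α × B // Injective φ ∧ Q (fun x => (φ x).1)} =
    ∑ j ∈ range (Fintype.card B + 1), (Fintype.card B).choose j *
      Nat.card {ψ : Fin n → α × Fin j // Injective ψ ∧ Q (fun x => (ψ x).1) ∧
        Surjective (fun x => (ψ x).2)} := by
  classical
  have e1 : {φ : Fin n → α × B // Injective φ ∧ Q (fun x => (φ x).1)} ≃
      Σ J : Finset B, {φ : Fin n → α × B // (Injective φ ∧ Q (fun x => (φ x).1)) ∧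
        image (fun x => (φ x).2) univ = J} := by
    refine (Equiv.sigmaFiberEquiv (fun φ : {φ : Fin n → α × B // Injective φ ∧
      Q (fun x => (φ x).1)} => image (fun x => (φ.1 x).2) univ)).symm.trans ?_
    refine Equiv.sigmaCongrRight fun J => ?_
    exact Equiv.subtypeSubtypeEquivSubtypeInter
      (fun φ : Fin n → α × B => Injective φ ∧ Q fun x => (φ x).1)
      (fun φ => image (fun x => (φ x).2) univ = J)
  rw [Nat.card_congr e1, nat_card_sigma]
  have e2 : ∀ J : Finset B,
      Nat.card {φ : Fin n → α × B // (Injective φ ∧ Q (fun x => (φ x).1)) ∧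
        image (fun x => (φ x).2) univ = J} =
      (fun j => Nat.card {ψ : Fin n → α × Fin j // Injective ψ ∧ Q (fun x => (ψ x).1) ∧
        Surjective (fun x => (ψ x).2)}) J.card :=
    fun J => Nat.card_congr (restrictEquiv Q J)
  calc (∑ J : Finset B, Nat.card {φ : Fin n → α × B //
          (Injective φ ∧ Q (fun x => (φ x).1)) ∧ image (fun x => (φ x).2) univ = J})
      = ∑ J ∈ (univ : Finset B).powerset, (fun j =>
        Nat.card {ψ : Fin n → α × Fin j // Injective ψ ∧ Q (fun x => (ψ x).1) ∧
          Surjective (fun x => (ψ x).2)}) J.card := by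
        rw [powerset_univ]; exact Finset.sum_congr rfl fun J _ => e2 J
    _ = _ := by
        refine (Finset.sum_powerset_apply_card (fun j =>
            Nat.card {ψ : Fin n → α × Fin j // Injective ψ ∧ Q (fun x => (ψ x).1) ∧
              Surjective (fun x => (ψ x).2)})).trans ?_
        simp [card_univ, smul_eq_mul]

def DSInj (n k m : ℕ) : Type :=
  {φ : Fin n → Fin k × Fin m // Injective φ ∧
    Surjective (fun x => (φ x).1) ∧ Surjective (fun x => (φ x).2)}

instance (n k m : ℕ) : Finite (DSInj n k m) := by unfold DSInj; infer_instance

def FInj (n k l : ℕ) : Type :=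
  {φ : Fin n → Fin k × Fin l // Injective φ ∧ Surjective (fun x => (φ x).1)}

instance (n k l : ℕ) : Finite (FInj n k l) := by unfold FInj; infer_instance

noncomputable def gg (n k m : ℕ) : ℕ := Nat.card (DSInj n k m)
noncomputable def ff (n k l : ℕ) : ℕ := Nat.card (FInj n k l)

lemma gg_eq_zero {n k m : ℕ} (h : n < m) : gg n k m = 0 := by
  have : IsEmpty (DSInj n k m) := by
    constructor
    rintro ⟨φ, -, -, h2⟩
    have := Fintype.card_le_of_surjective _ h2
    simp only [Fintype.card_fin] at this
    omega
  simp [gg, Nat.card_of_isEmpty]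

lemma ff_eq_sum (n k l : ℕ) :
    ff n k l = ∑ m ∈ range (l + 1), l.choose m * gg n k m := by
  have h := card_classify (Fin k) (fun p => Surjective p) (Fin l) (n := n)
  simpa [Fintype.card_fin, ff, FInj, gg, DSInj, and_assoc] using h

/-- swap -/
def swapEquiv {n : ℕ} {α β : Type*} (P : (Fin n → α) → Prop) (R : (Fin n → β) → Prop) :
    {φ : Fin n → α × β // Injective φ ∧ P (fun x => (φ x).1) ∧ R (fun x => (φ x).2)} ≃
    {φ : Fin n → β × α // Injective φ ∧ R (fun x => (φ x).1) ∧ P (fun x => (φ x).2)} where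
  toFun φ := ⟨fun x => ((φ.1 x).2, (φ.1 x).1), fun x y hxy => by
      simp only [Prod.mk.injEq] at hxy
      exact φ.2.1 (Prod.ext hxy.2 hxy.1), φ.2.2.2, φ.2.2.1⟩
  invFun φ := ⟨fun x => ((φ.1 x).2, (φ.1 x).1), fun x y hxy => by
      simp only [Prod.mk.injEq] at hxy
      exact φ.2.1 (Prod.ext hxy.2 hxy.1), φ.2.2.2, φ.2.2.1⟩
  left_inv φ := by apply Subtype.ext; funext x; rfl
  right_inv φ := by apply Subtype.ext; funext x; rfl

lemma desc_eq_sum (n k l : ℕ) :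
    (k * l).descFactorial n = ∑ j ∈ range (k + 1), k.choose j * ff n j l := by
  have h := card_classify (Fin l) (fun _ => True) (Fin k) (n := n)
  have lhs : Nat.card {φ : Fin n → Fin l × Fin k // Injective φ ∧
      (fun _ => True) (fun x => (φ x).1)} = (k * l).descFactorial n := by
    have e : {φ : Fin n → Fin l × Fin k // Injective φ ∧
        (fun _ => True) (fun x => (φ x).1)} ≃ (Fin n ↪ Fin l × Fin k) :=
      (Equiv.subtypeEquivRight (fun φ => by simp)).trans
        (Equiv.subtypeInjectiveEquivEmbedding _ _)
    rw [Nat.card_congr e, Nat.card_eq_fintype_card, Fintype.card_embedding_eq]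
    simp [Fintype.card_prod, Nat.mul_comm]
  have rhs : ∀ j, Nat.card {ψ : Fin n → Fin l × Fin j // Injective ψ ∧
      (fun _ => True) (fun x => (ψ x).1) ∧ Surjective (fun x => (ψ x).2)} = ff n j l := by
    intro j
    have e : {ψ : Fin n → Fin l × Fin j // Injective ψ ∧
        (fun _ => True) (fun x => (ψ x).1) ∧ Surjective (fun x => (ψ x).2)} ≃ FInj n j l := by
      refine (swapEquiv (fun _ => True) (fun p : Fin n → Fin j => Surjective p)).trans
        (Equiv.subtypeEquivRight (fun φ => ?_))
      tauto
    exact Nat.card_congr e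
  rw [← lhs, h]
  simp only [Fintype.card_fin]
  exact Finset.sum_congr rfl fun j _ => by rw [rhs j]

lemma alt_sum_choose (m : ℕ) :
    ∑ d ∈ range (m + 1), (-1 : ℝ) ^ (m - d) * m.choose d = if m = 0 then 1 else 0 := by
  have h : ∀ d ∈ range (m + 1), (-1 : ℝ) ^ (m - d) * m.choose d
      = (-1 : ℝ) ^ m * ((-1) ^ d * m.choose d) := by
    intro d hd
    rw [mem_range, Nat.lt_succ_iff] at hd
    have h1 : (-1 : ℝ) ^ (m - d) * (-1) ^ d = (-1) ^ m := by
      rw [← pow_add, Nat.sub_add_cancel hd]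
    have h2 : (-1 : ℝ) ^ d * (-1) ^ d = 1 := by
      rw [← pow_add]; exact Even.neg_one_pow ⟨d, rfl⟩
    calc (-1 : ℝ) ^ (m - d) * (m.choose d : ℝ)
        = ((-1 : ℝ) ^ (m - d) * ((-1) ^ d * (-1) ^ d)) * (m.choose d : ℝ) := by
          rw [h2, mul_one]
      _ = (-1 : ℝ) ^ m * ((-1) ^ d * (m.choose d : ℝ)) := by
          rw [← mul_assoc, h1]; ring
  rw [Finset.sum_congr rfl h, ← Finset.mul_sum]
  have := Int.alternating_sum_range_choose (n := m)
  have h2 : ∑ d ∈ range (m + 1), (-1 : ℝ) ^ d * m.choose d = if m = 0 then 1 else 0 := by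
    have := congrArg (fun z : ℤ => (z : ℝ)) this
    push_cast at this
    simpa using this
  rw [h2]
  rcases Nat.eq_zero_or_pos m with h0 | h0
  · simp [h0]
  · simp [Nat.pos_iff_ne_zero.1 h0]

/-- Binomial inversion. -/
lemma binom_inversion (k : ℕ) (a b : ℕ → ℝ)
    (h : ∀ K, K ≤ k → a K = ∑ j ∈ range (K + 1), (K.choose j : ℝ) * b j) :
    b k = ∑ j ∈ range (k + 1), (-1 : ℝ) ^ (k - j) * (k.choose j : ℝ) * a j := by
  have key : ∀ j ∈ range (k + 1),
      (-1 : ℝ) ^ (k - j) * (k.choose j : ℝ) * a j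
      = ∑ i ∈ range (k + 1), (-1 : ℝ) ^ (k - j) * (k.choose j : ℝ) * (j.choose i : ℝ) * b i := by
    intro j hj
    rw [mem_range, Nat.lt_succ_iff] at hj
    rw [h j hj, Finset.mul_sum]
    rw [← Finset.sum_subset (Finset.range_subset_range.2 (Nat.succ_le_succ hj))]
    · exact Finset.sum_congr rfl fun i _ => by ring
    · intro i _ hi
      rw [mem_range, Nat.lt_succ_iff] at hi
      push_neg at hi
      rw [Nat.choose_eq_zero_of_lt hi]
      simp
  rw [Finset.sum_congr rfl key, Finset.sum_comm]
  have inner : ∀ i ∈ range (k + 1),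
      ∑ j ∈ range (k + 1), (-1 : ℝ) ^ (k - j) * (k.choose j : ℝ) * (j.choose i : ℝ) * b i
      = (if i = k then 1 else 0) * b i := by
    intro i hi
    rw [mem_range, Nat.lt_succ_iff] at hi
    have hsum : ∑ j ∈ range (k + 1), (-1 : ℝ) ^ (k - j) * (k.choose j : ℝ) * (j.choose i : ℝ)
        = if i = k then 1 else 0 := by
      -- terms with j < i vanish
      have split : range (k + 1) = Finset.Ico 0 i ∪ Finset.Ico i (k + 1) := by
        rw [Finset.Ico_union_Ico_eq_Ico (Nat.zero_le i) (Nat.lt_succ_of_le hi).le,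
          Finset.range_eq_Ico]
      rw [split, Finset.sum_union]
      · have z1 : ∑ j ∈ Finset.Ico 0 i, (-1 : ℝ) ^ (k - j) * (k.choose j : ℝ) * (j.choose i : ℝ)
            = 0 := by
          apply Finset.sum_eq_zero
          intro j hj
          rw [Finset.mem_Ico] at hj
          rw [Nat.choose_eq_zero_of_lt hj.2]
          simp
        rw [z1, zero_add]
        have reindex : ∑ j ∈ Finset.Ico i (k + 1),
            (-1 : ℝ) ^ (k - j) * (k.choose j : ℝ) * (j.choose i : ℝ)
            = ∑ d ∈ range (k - i + 1),
              (-1 : ℝ) ^ (k - (i + d)) * (k.choose (i + d) : ℝ) * ((i + d).choose i : ℝ) := by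
          rw [Finset.sum_Ico_eq_sum_range]
          have : k + 1 - i = k - i + 1 := by omega
          rw [this]
        rw [reindex]
        have chooseid : ∀ d ∈ range (k - i + 1),
            (-1 : ℝ) ^ (k - (i + d)) * (k.choose (i + d) : ℝ) * ((i + d).choose i : ℝ)
            = (k.choose i : ℝ) * ((-1 : ℝ) ^ ((k - i) - d) * ((k - i).choose d : ℝ)) := by
          intro d hd
          rw [mem_range, Nat.lt_succ_iff] at hd
          have h1 : i + d ≤ k := by omega
          have h2 : i ≤ i + d := Nat.le_add_right i d
          have := Nat.choose_mul (n := k) h2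
          have hcast : (k.choose (i + d) : ℝ) * ((i + d).choose i : ℝ)
              = (k.choose i : ℝ) * ((k - i).choose (i + d - i) : ℝ) := by
            exact_mod_cast congrArg (fun z : ℕ => (z : ℝ)) this
          have h3 : i + d - i = d := by omega
          have h4 : k - (i + d) = (k - i) - d := by omega
          rw [mul_assoc, hcast, h3, h4]
          ring
        rw [Finset.sum_congr rfl chooseid, ← Finset.mul_sum, alt_sum_choose (k - i)]
        by_cases hik : i = k
        · simp [hik]
        · have : k - i ≠ 0 := by omega
          simp [hik, this]
      · apply Finset.Ico_disjoint_Ico_consecutive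
    rw [← Finset.sum_mul, hsum]
  rw [Finset.sum_congr rfl inner]
  simp

lemma exp_one_eq : Real.exp 1 = ∑' i : ℕ, 1 / (i.factorial : ℝ) := by
  rw [Real.exp_eq_exp_ℝ, NormedSpace.exp_eq_tsum_div]
  simp

lemma summable_one_div_factorial : Summable (fun i : ℕ => 1 / (i.factorial : ℝ)) := by
  simpa using Real.summable_pow_div_factorial 1

lemma comp_eq (m : ℕ) : ∀ i : ℕ, (((m + i).choose m : ℝ) / (m + i).factorial)
    = (1 / m.factorial) * (1 / (i.factorial : ℝ)) := by
  intro i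
  have h := Nat.choose_mul_factorial_mul_factorial (Nat.le_add_right m i)
  have h2 : m + i - m = i := by omega
  rw [h2] at h
  have hm : (m.factorial : ℝ) ≠ 0 := Nat.cast_ne_zero.2 m.factorial_ne_zero
  have hi : (i.factorial : ℝ) ≠ 0 := Nat.cast_ne_zero.2 i.factorial_ne_zero
  have hmi : ((m + i).factorial : ℝ) ≠ 0 := Nat.cast_ne_zero.2 (m + i).factorial_ne_zero
  have hcast : ((m + i).choose m : ℝ) * m.factorial * i.factorial = (m + i).factorial := by
    exact_mod_cast congrArg (fun z : ℕ => (z : ℝ)) h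
  field_simp
  linarith [hcast]

lemma support_subset (m : ℕ) :
    Function.support (fun l : ℕ => (l.choose m : ℝ) / l.factorial) ⊆
      Set.range (fun i : ℕ => m + i) := by
  intro l hl
  simp only [Function.mem_support] at hl
  by_contra hc
  have : l < m := by
    simp only [Set.mem_range] at hc
    push_neg at hc
    by_contra hlm
    push_neg at hlm
    exact hc (l - m) (by omega)
  rw [Nat.choose_eq_zero_of_lt this] at hl
  simp at hl

lemma add_injective (m : ℕ) : Injective (fun i : ℕ => m + i) := fun a b h => by simpa using h

lemma summable_choose_div_factorial (m : ℕ) :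
    Summable (fun l : ℕ => (l.choose m : ℝ) / l.factorial) := by
  rw [← (add_injective m).summable_iff (f := fun l : ℕ => (l.choose m : ℝ) / l.factorial)
    (fun x hx => by by_contra hc; exact hx (support_subset m hc))]
  have : ((fun l : ℕ => (l.choose m : ℝ) / l.factorial) ∘ (fun i : ℕ => m + i))
      = fun i : ℕ => (1 / m.factorial) * (1 / (i.factorial : ℝ)) := by
    funext i; exact comp_eq m i
  rw [this]
  exact summable_one_div_factorial.mul_left _

lemma tsum_choose_div_factorial (m : ℕ) :
    ∑' l : ℕ, (l.choose m : ℝ) / l.factorial = Real.exp 1 / m.factorial := by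
  rw [← (add_injective m).tsum_eq (f := fun l : ℕ => (l.choose m : ℝ) / l.factorial)
    (support_subset m)]
  calc ∑' i : ℕ, (((m + i).choose m : ℝ) / (m + i).factorial)
      = ∑' i : ℕ, (1 / (m.factorial : ℝ)) * (1 / (i.factorial : ℝ)) := by
        exact tsum_congr (comp_eq m)
    _ = (1 / (m.factorial : ℝ)) * ∑' i : ℕ, 1 / (i.factorial : ℝ) := tsum_mul_left
    _ = Real.exp 1 / m.factorial := by rw [← exp_one_eq]; ring

def PairsM (n k m : ℕ) : Type :=
  {p : Finpartition (Finset.univ : Finset (Fin n)) ×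
      Finpartition (Finset.univ : Finset (Fin n)) //
    (IsPartialRectangle p.1 p.2 ∧ p.1.parts.card = k) ∧ p.2.parts.card = m}

instance (n k m : ℕ) : Finite (PairsM n k m) := by unfold PairsM; infer_instance

variable {n k m : ℕ}

-- convenience
lemma part_mem' (P : Finpartition (Finset.univ : Finset (Fin n))) (x : Fin n) :
    P.part x ∈ P.parts := P.part_mem.2 (mem_univ x)

lemma mem_part' (P : Finpartition (Finset.univ : Finset (Fin n))) (x : Fin n) :
    x ∈ P.part x := P.mem_part (mem_univ x)

lemma finpartition_eq_of_part_eq {P Q : Finpartition (Finset.univ : Finset (Fin n))}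
    (h : ∀ x, P.part x = Q.part x) : P = Q := by
  have key : ∀ (P Q : Finpartition (Finset.univ : Finset (Fin n))),
      (∀ x, P.part x = Q.part x) → P.parts ⊆ Q.parts := by
    intro P Q hPQ B hB
    obtain ⟨x, hx⟩ := Finset.nonempty_iff_ne_empty.2 (P.ne_bot hB)
    have : P.part x = B := P.part_eq_of_mem hB hx
    rw [← this, hPQ x]
    exact part_mem' Q x
  exact Finpartition.ext (Finset.Subset.antisymm (key P Q h)
    (key Q P (fun x => (h x).symm)))

/-- The pairing map. -/
def psi (σ : Σ _p : PairsM n k m,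
    ({B // B ∈ _p.1.1.parts} ≃ Fin k) × ({C // C ∈ _p.1.2.parts} ≃ Fin m)) :
    Fin n → Fin k × Fin m :=
  fun x => (σ.2.1 ⟨σ.1.1.1.part x, part_mem' _ x⟩, σ.2.2 ⟨σ.1.1.2.part x, part_mem' _ x⟩)

lemma psi_mem_part_fst (σ : Σ _p : PairsM n k m,
    ({B // B ∈ _p.1.1.parts} ≃ Fin k) × ({C // C ∈ _p.1.2.parts} ≃ Fin m)) (x y : Fin n) :
    y ∈ σ.1.1.1.part x ↔ (psi σ y).1 = (psi σ x).1 := by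
  constructor
  · intro hy
    have : σ.1.1.1.part y = σ.1.1.1.part x :=
      σ.1.1.1.part_eq_of_mem (part_mem' _ x) hy
    simp only [psi]
    exact congrArg σ.2.1 (Subtype.ext this)
  · intro hy
    have h2 : (⟨σ.1.1.1.part y, part_mem' _ y⟩ : {B // B ∈ σ.1.1.1.parts})
        = ⟨σ.1.1.1.part x, part_mem' _ x⟩ := σ.2.1.injective hy
    have h3 : σ.1.1.1.part y = σ.1.1.1.part x := congrArg Subtype.val h2
    rw [← h3]
    exact mem_part' _ y

lemma psi_mem_part_snd (σ : Σ _p : PairsM n k m,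
    ({B // B ∈ _p.1.1.parts} ≃ Fin k) × ({C // C ∈ _p.1.2.parts} ≃ Fin m)) (x y : Fin n) :
    y ∈ σ.1.1.2.part x ↔ (psi σ y).2 = (psi σ x).2 := by
  constructor
  · intro hy
    have : σ.1.1.2.part y = σ.1.1.2.part x :=
      σ.1.1.2.part_eq_of_mem (part_mem' _ x) hy
    simp only [psi]
    exact congrArg σ.2.2 (Subtype.ext this)
  · intro hy
    have h2 : (⟨σ.1.1.2.part y, part_mem' _ y⟩ : {C // C ∈ σ.1.1.2.parts})
        = ⟨σ.1.1.2.part x, part_mem' _ x⟩ := σ.2.2.injective hy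
    have h3 : σ.1.1.2.part y = σ.1.1.2.part x := congrArg Subtype.val h2
    rw [← h3]
    exact mem_part' _ y

lemma psi_injective (σ : Σ _p : PairsM n k m,
    ({B // B ∈ _p.1.1.parts} ≃ Fin k) × ({C // C ∈ _p.1.2.parts} ≃ Fin m)) :
    Injective (psi σ) := by
  intro x y hxy
  have h1 : y ∈ σ.1.1.1.part x := (psi_mem_part_fst σ x y).2 (congrArg Prod.fst hxy).symm
  have h2 : y ∈ σ.1.1.2.part x := (psi_mem_part_snd σ x y).2 (congrArg Prod.snd hxy).symm
  have hcard := σ.1.2.1.1 _ (part_mem' σ.1.1.1 x) _ (part_mem' σ.1.1.2 x)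
  exact Finset.card_le_one.1 hcard x
    (mem_inter.2 ⟨mem_part' _ x, mem_part' _ x⟩) y (mem_inter.2 ⟨h1, h2⟩)

lemma psi_surj_fst (σ : Σ _p : PairsM n k m,
    ({B // B ∈ _p.1.1.parts} ≃ Fin k) × ({C // C ∈ _p.1.2.parts} ≃ Fin m)) :
    Surjective (fun x => (psi σ x).1) := by
  intro i
  obtain ⟨B, hB⟩ : ∃ B, σ.2.1 B = i := σ.2.1.surjective i
  obtain ⟨x, hx⟩ := Finset.nonempty_iff_ne_empty.2 (σ.1.1.1.ne_bot B.2)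
  refine ⟨x, ?_⟩
  have : σ.1.1.1.part x = B.1 := σ.1.1.1.part_eq_of_mem B.2 hx
  simp only [psi]
  rw [show (⟨σ.1.1.1.part x, part_mem' _ x⟩ : {B // B ∈ σ.1.1.1.parts}) = B
    from Subtype.ext this, hB]

lemma psi_surj_snd (σ : Σ _p : PairsM n k m,
    ({B // B ∈ _p.1.1.parts} ≃ Fin k) × ({C // C ∈ _p.1.2.parts} ≃ Fin m)) :
    Surjective (fun x => (psi σ x).2) := by
  intro i
  obtain ⟨C, hC⟩ : ∃ C, σ.2.2 C = i := σ.2.2.surjective i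
  obtain ⟨x, hx⟩ := Finset.nonempty_iff_ne_empty.2 (σ.1.1.2.ne_bot C.2)
  refine ⟨x, ?_⟩
  have : σ.1.1.2.part x = C.1 := σ.1.1.2.part_eq_of_mem C.2 hx
  simp only [psi]
  rw [show (⟨σ.1.1.2.part x, part_mem' _ x⟩ : {C // C ∈ σ.1.1.2.parts}) = C
    from Subtype.ext this, hC]

def Psi (σ : Σ _p : PairsM n k m,
    ({B // B ∈ _p.1.1.parts} ≃ Fin k) × ({C // C ∈ _p.1.2.parts} ≃ Fin m)) :
    DSInj n k m :=
  ⟨psi σ, psi_injective σ, psi_surj_fst σ, psi_surj_snd σ⟩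


lemma Psi_injective : Injective (Psi : (Σ _p : PairsM n k m,
    ({B // B ∈ _p.1.1.parts} ≃ Fin k) × ({C // C ∈ _p.1.2.parts} ≃ Fin m)) → DSInj n k m) := by
  intro σ σ' h
  have hfun : psi σ = psi σ' := congrArg Subtype.val h
  have hπ : σ.1.1.1 = σ'.1.1.1 := by
    apply finpartition_eq_of_part_eq
    intro x
    ext y
    rw [psi_mem_part_fst σ x y, psi_mem_part_fst σ' x y, hfun]
  have hτ : σ.1.1.2 = σ'.1.1.2 := by
    apply finpartition_eq_of_part_eq
    intro x
    ext y
    rw [psi_mem_part_snd σ x y, psi_mem_part_snd σ' x y, hfun]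
  obtain ⟨⟨⟨π, τ⟩, hp⟩, a, b⟩ := σ
  obtain ⟨⟨⟨π', τ'⟩, hp'⟩, a', b'⟩ := σ'
  simp only at hπ hτ
  subst hπ hτ
  have hpp : (⟨(π, τ), hp⟩ : PairsM n k m) = ⟨(π, τ), hp'⟩ := Subtype.ext rfl
  have ha : a = a' := by
    apply Equiv.ext
    intro B
    obtain ⟨x, hx⟩ := Finset.nonempty_iff_ne_empty.2 (π.ne_bot B.2)
    have hBx : B = ⟨π.part x, part_mem' _ x⟩ := Subtype.ext (π.part_eq_of_mem B.2 hx).symm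
    rw [hBx]
    exact congrArg Prod.fst (congrFun hfun x)
  have hb : b = b' := by
    apply Equiv.ext
    intro C
    obtain ⟨x, hx⟩ := Finset.nonempty_iff_ne_empty.2 (τ.ne_bot C.2)
    have hCx : C = ⟨τ.part x, part_mem' _ x⟩ := Subtype.ext (τ.part_eq_of_mem C.2 hx).symm
    rw [hCx]
    exact congrArg Prod.snd (congrFun hfun x)
  subst ha hb
  rfl

section mkPartition

variable {β : Type*} [DecidableEq β]

def kerDec (f : Fin n → β) : DecidableRel ⇑(Setoid.ker f) :=
  fun a b => decidable_of_iff (f a = f b) Setoid.ker_def.symm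

def mkPartition (f : Fin n → β) : Finpartition (Finset.univ : Finset (Fin n)) :=
  @Finpartition.ofSetoid _ _ _ (Setoid.ker f) (kerDec f)

lemma mem_mkPartition {f : Fin n → β} {x y : Fin n} :
    y ∈ (mkPartition f).part x ↔ f x = f y := by
  unfold mkPartition
  letI : DecidableRel ⇑(Setoid.ker f) := kerDec f
  exact (Finpartition.mem_part_ofSetoid_iff_rel).trans Setoid.ker_def

lemma const_on_block {f : Fin n → β} {B : Finset (Fin n)}
    (hB : B ∈ (mkPartition f).parts) {x y : Fin n} (hx : x ∈ B) (hy : y ∈ B) :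
    f x = f y := by
  have := (mkPartition f).part_eq_of_mem hB hx
  rw [← this] at hy
  exact mem_mkPartition.1 hy

lemma exists_label {K : ℕ} (f : Fin n → Fin K) (hf : Surjective f) :
    ∃ a : {B // B ∈ (mkPartition f).parts} ≃ Fin K,
      ∀ x : Fin n, a ⟨(mkPartition f).part x, part_mem' _ x⟩ = f x := by
  classical
  set P := mkPartition f with hP
  have hne : ∀ B : {B // B ∈ P.parts}, B.1.Nonempty :=
    fun B => Finset.nonempty_iff_ne_empty.2 (P.ne_bot B.2)
  set F : {B // B ∈ P.parts} → Fin K := fun B => f (hne B).choose with hF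
  have hFspec : ∀ (B : {B // B ∈ P.parts}) (x : Fin n), x ∈ B.1 → f x = F B := by
    intro B x hx
    exact const_on_block B.2 hx (hne B).choose_spec
  have hFinj : Injective F := by
    intro B B' hBB
    have hxB := (hne B).choose_spec
    have hxB' := (hne B').choose_spec
    have h1 : f (hne B).choose = f (hne B').choose := hBB
    have e1 : P.part (hne B).choose = B.1 := P.part_eq_of_mem B.2 hxB
    have e2 : P.part (hne B').choose = B'.1 := P.part_eq_of_mem B'.2 hxB'
    have h2 : (hne B').choose ∈ B.1 := by
      have h3 : (hne B').choose ∈ P.part (hne B).choose := mem_mkPartition.2 h1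
      rwa [e1] at h3
    exact Subtype.ext ((P.part_eq_of_mem B.2 h2).symm.trans e2)
  have hFsurj : Surjective F := by
    intro i
    obtain ⟨x, hx⟩ := hf i
    refine ⟨⟨P.part x, part_mem' _ x⟩, ?_⟩
    rw [← (hFspec ⟨P.part x, part_mem' _ x⟩ x (mem_part' _ x))]
    exact hx
  refine ⟨Equiv.ofBijective F ⟨hFinj, hFsurj⟩, ?_⟩
  intro x
  exact (hFspec ⟨P.part x, part_mem' _ x⟩ x (mem_part' _ x)).symm

end mkPartition

lemma nat_card_sigma' {ι : Type*} [Fintype ι] (f : ι → Type*) [∀ i, Finite (f i)] :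
    Nat.card (Σ i, f i) = ∑ i, Nat.card (f i) := by
  have : ∀ i, Fintype (f i) := fun i => Fintype.ofFinite _
  simp [Nat.card_eq_fintype_card, Fintype.card_sigma]

lemma mkPartition_card {K : ℕ} (f : Fin n → Fin K) (hf : Surjective f) :
    (mkPartition f).parts.card = K := by
  obtain ⟨a, -⟩ := exists_label f hf
  calc (mkPartition f).parts.card
      = Fintype.card {B // B ∈ (mkPartition f).parts} := (Fintype.card_coe _).symm
    _ = Fintype.card (Fin K) := Fintype.card_congr a
    _ = K := Fintype.card_fin K

lemma Psi_surjective : Surjective (Psi : (Σ _p : PairsM n k m,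
    ({B // B ∈ _p.1.1.parts} ≃ Fin k) × ({C // C ∈ _p.1.2.parts} ≃ Fin m)) → DSInj n k m) := by
  rintro ⟨φ, hinj, h1, h2⟩
  obtain ⟨a, ha⟩ := exists_label (fun x => (φ x).1) h1
  obtain ⟨b, hb⟩ := exists_label (fun x => (φ x).2) h2
  have hPR : IsPartialRectangle (mkPartition (fun x => (φ x).1))
      (mkPartition (fun x => (φ x).2)) := by
    intro B hB C hC
    rw [Finset.card_le_one]
    intro u hu v hv
    rw [mem_inter] at hu hv
    apply hinj
    exact Prod.ext (const_on_block hB hu.1 hv.1) (const_on_block hC hu.2 hv.2)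
  refine ⟨⟨⟨(mkPartition (fun x => (φ x).1), mkPartition (fun x => (φ x).2)),
    ⟨hPR, mkPartition_card _ h1⟩, mkPartition_card _ h2⟩, a, b⟩, ?_⟩
  apply Subtype.ext
  funext x
  exact Prod.ext (ha x) (hb x)

lemma card_dsinj (n k m : ℕ) :
    Nat.card (DSInj n k m) = Nat.card (PairsM n k m) * (k.factorial * m.factorial) := by
  classical
  have hbij : Bijective (Psi : (Σ _p : PairsM n k m,
      ({B // B ∈ _p.1.1.parts} ≃ Fin k) × ({C // C ∈ _p.1.2.parts} ≃ Fin m)) → DSInj n k m) :=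
    ⟨Psi_injective, Psi_surjective⟩
  rw [← Nat.card_eq_of_bijective _ hbij]
  have : Fintype (PairsM n k m) := Fintype.ofFinite _
  rw [nat_card_sigma']
  have hterm : ∀ p : PairsM n k m,
      Nat.card (({B // B ∈ p.1.1.parts} ≃ Fin k) × ({C // C ∈ p.1.2.parts} ≃ Fin m))
        = k.factorial * m.factorial := by
    intro p
    have e1 : {B // B ∈ p.1.1.parts} ≃ Fin k :=
      Fintype.equivFinOfCardEq (by rw [Fintype.card_coe]; exact p.2.1.2)
    have e2 : {C // C ∈ p.1.2.parts} ≃ Fin m :=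
      Fintype.equivFinOfCardEq (by rw [Fintype.card_coe]; exact p.2.2)
    rw [Nat.card_eq_fintype_card, Fintype.card_prod, Fintype.card_equiv e1,
      Fintype.card_equiv e2, Fintype.card_coe, Fintype.card_coe, p.2.1.2, p.2.2]
  rw [Finset.sum_congr rfl (fun p _ => hterm p), Finset.sum_const, card_univ, smul_eq_mul,
    Nat.card_eq_fintype_card]

lemma card_main_split (n k : ℕ) :
    Nat.card {p : Finpartition (Finset.univ : Finset (Fin n)) ×
        Finpartition (Finset.univ : Finset (Fin n)) //
        IsPartialRectangle p.1 p.2 ∧ p.1.parts.card = k} =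
    ∑ m ∈ range (n + 1), Nat.card (PairsM n k m) := by
  classical
  rw [Nat.card_eq_fintype_card, Fintype.card_subtype]
  have hmaps : ∀ p ∈ Finset.univ.filter (fun p : Finpartition (Finset.univ : Finset (Fin n)) ×
      Finpartition (Finset.univ : Finset (Fin n)) =>
        IsPartialRectangle p.1 p.2 ∧ p.1.parts.card = k),
      p.2.parts.card ∈ range (n + 1) := by
    intro p _
    rw [mem_range, Nat.lt_succ_iff]
    have := p.2.card_parts_le_card
    simpa using this
  rw [Finset.card_eq_sum_card_fiberwise hmaps]
  refine Finset.sum_congr rfl fun m _ => ?_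
  rw [Finset.filter_filter]
  have hc : Nat.card (PairsM n k m) = #(Finset.univ.filter
      (fun p : Finpartition (Finset.univ : Finset (Fin n)) ×
        Finpartition (Finset.univ : Finset (Fin n)) =>
        (IsPartialRectangle p.1 p.2 ∧ p.1.parts.card = k) ∧ p.2.parts.card = m)) := by
    unfold PairsM
    rw [Nat.card_eq_fintype_card, Fintype.card_subtype]
  rw [hc]

lemma card_dsinj_gg (n k m : ℕ) :
    gg n k m = Nat.card (PairsM n k m) * (k.factorial * m.factorial) :=
  card_dsinj n k m

lemma ff_eq_sum' (n k l : ℕ) :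
    ff n k l = ∑ m ∈ range (n + 1), l.choose m * gg n k m := by
  rw [ff_eq_sum]
  rcases le_total l n with h | h
  · exact Finset.sum_subset (Finset.range_subset_range.2 (by omega)) (fun m _ hm => by
      rw [mem_range, Nat.lt_succ_iff] at *
      rw [Nat.choose_eq_zero_of_lt (by omega), Nat.zero_mul])
  · exact (Finset.sum_subset (Finset.range_subset_range.2 (by omega)) (fun m _ hm => by
      rw [mem_range, Nat.lt_succ_iff] at *
      rw [gg_eq_zero (show n < m by omega), Nat.mul_zero])).symm

lemma step1 (n k l : ℕ) :
    (ff n k l : ℝ) = (n.factorial : ℝ) *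
      ∑ j ∈ range (k + 1), (-1 : ℝ) ^ (k - j) * (k.choose j : ℝ) * ((l * j).choose n : ℝ) := by
  have h := binom_inversion k (fun j => ((j * l).descFactorial n : ℝ))
    (fun j => (ff n j l : ℝ)) (fun K _ => by
      have := desc_eq_sum n K l
      exact_mod_cast congrArg (fun z : ℕ => (z : ℝ)) this)
  rw [h, Finset.mul_sum]
  refine Finset.sum_congr rfl fun j _ => ?_
  have : ((j * l).descFactorial n : ℝ) = (n.factorial : ℝ) * ((l * j).choose n : ℝ) := by
    rw [Nat.mul_comm l j]
    exact_mod_cast congrArg (fun z : ℕ => (z : ℝ))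
      (Nat.descFactorial_eq_factorial_mul_choose (j * l) n)
  rw [this]
  ring

lemma step2 (n k l : ℕ) :
    (ff n k l : ℝ) / l.factorial =
      ∑ m ∈ range (n + 1), (gg n k m : ℝ) * ((l.choose m : ℝ) / l.factorial) := by
  rw [ff_eq_sum' n k l]
  push_cast
  rw [Finset.sum_div]
  exact Finset.sum_congr rfl fun m _ => by ring

lemma summable_F (n k : ℕ) : Summable (fun l : ℕ => (ff n k l : ℝ) / l.factorial) := by
  have : (fun l : ℕ => (ff n k l : ℝ) / l.factorial) = fun l =>
      ∑ m ∈ range (n + 1), (gg n k m : ℝ) * ((l.choose m : ℝ) / l.factorial) := by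
    funext l; exact step2 n k l
  rw [this]
  exact summable_sum fun m _ => (summable_choose_div_factorial m).mul_left _

lemma tsum_F (n k : ℕ) : ∑' l : ℕ, (ff n k l : ℝ) / l.factorial =
    ∑ m ∈ range (n + 1), (gg n k m : ℝ) * (Real.exp 1 / m.factorial) := by
  rw [tsum_congr (step2 n k)]
  rw [Summable.tsum_finsetSum (fun m _ => (summable_choose_div_factorial m).mul_left _)]
  exact Finset.sum_congr rfl fun m _ => by
    rw [tsum_mul_left, tsum_choose_div_factorial m]

end PittelAux

open PittelAux in
/-- Pittel's formula: for `k ≥ 1` and `n ≥ 1`, the number of partial rectangles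
`(π, τ)` on an `n`-set with `π` having exactly `k` blocks equals
`(n!/(k!·e)) · ∑_{l≥0} (1/l!) · ∑_{j=0}^{k} (−1)^{k−j} C(k,j) C(l·j, n)`,
and the outer series converges. -/
theorem card_partialRectangles_height (k n : ℕ) (hk : 1 ≤ k) (hn : 1 ≤ n) :
    (Nat.card {p : Finpartition (Finset.univ : Finset (Fin n)) ×
          Finpartition (Finset.univ : Finset (Fin n)) //
          IsPartialRectangle p.1 p.2 ∧ p.1.parts.card = k} : ℝ) =
      ((n.factorial : ℝ) / (k.factorial * Real.exp 1)) *
        ∑' l : ℕ, (1 / (l.factorial : ℝ)) *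
          ∑ j ∈ Finset.range (k + 1),
            (-1 : ℝ) ^ (k - j) * (k.choose j : ℝ) * ((l * j).choose n : ℝ) ∧
    Summable (fun l : ℕ => (1 / (l.factorial : ℝ)) *
      ∑ j ∈ Finset.range (k + 1),
        (-1 : ℝ) ^ (k - j) * (k.choose j : ℝ) * ((l * j).choose n : ℝ)) := by
  have hn' : (n.factorial : ℝ) ≠ 0 := Nat.cast_ne_zero.2 n.factorial_ne_zero
  have hk' : (k.factorial : ℝ) ≠ 0 := Nat.cast_ne_zero.2 k.factorial_ne_zero
  have he : Real.exp 1 ≠ 0 := (Real.exp_pos 1).ne'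
  have hterm : ∀ l : ℕ, (1 / (l.factorial : ℝ)) *
      ∑ j ∈ Finset.range (k + 1),
        (-1 : ℝ) ^ (k - j) * (k.choose j : ℝ) * ((l * j).choose n : ℝ)
      = ((ff n k l : ℝ) / l.factorial) * (1 / n.factorial) := by
    intro l
    have hS : (∑ j ∈ Finset.range (k + 1),
        (-1 : ℝ) ^ (k - j) * (k.choose j : ℝ) * ((l * j).choose n : ℝ))
        = (ff n k l : ℝ) / n.factorial := by
      rw [step1 n k l, mul_div_cancel_left₀ _ hn']
    rw [hS]
    ring
  constructor
  · rw [tsum_congr hterm, tsum_mul_right, tsum_F n k, card_main_split n k]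
    push_cast
    rw [Finset.sum_mul, Finset.mul_sum]
    refine Finset.sum_congr rfl fun m _ => ?_
    have hm' : (m.factorial : ℝ) ≠ 0 := Nat.cast_ne_zero.2 m.factorial_ne_zero
    have hgg : (gg n k m : ℝ) = (Nat.card (PairsM n k m) : ℝ) *
        ((k.factorial : ℝ) * m.factorial) := by
      exact_mod_cast congrArg (fun z : ℕ => (z : ℝ)) (card_dsinj_gg n k m)
    rw [hgg]
    field_simp
  · have : (fun l : ℕ => (1 / (l.factorial : ℝ)) *
        ∑ j ∈ Finset.range (k + 1),
          (-1 : ℝ) ^ (k - j) * (k.choose j : ℝ) * ((l * j).choose n : ℝ))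
        = fun l => ((ff n k l : ℝ) / l.factorial) * (1 / n.factorial) := funext hterm
    rw [this]
    exact (summable_F n k).mul_right _
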